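/- arXiv:1707.05928 — 3 statements merged into one kernel-verified Lean document; each statement's English description precedes it below -/
import Mathlib

section
/- Let g : Finset α → ℝ, let k : α → ℝ with k(e) > 0 for every e, let K > 0 and v ≥ 0 be reals, let S be a finset and e ∉ S an element with k(S) + k(e) ≤ K. If g(S) ≥ v·k(S)/(2K) and the threshold condition g(S ∪ {e}) − g(S) ≥ k(e)·(v/2 − g(S))/(K − k(S)) holds, then g(S ∪ {e}) ≥ v·k(S ∪ {e})/(2K). -/
/-!
Let `L x = v x / (2K)`, so the invariant says `(k(S), g(S))` lies on or above the line `L`, whose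
value at the budget `K` is `v/2`. The threshold condition says that `g(S ∪ {e})` lies on or above the
chord from `(k(S), g(S))` to `(K, v/2)`, evaluated at `k(S) + k(e) ≤ K`. Both endpoints of that chord
lie on or above `L`, hence so does every point of it between them.
-/

theorem mul_le_of_le_chord {a s c K G G' : ℝ} (hc : 0 < c) (hsc : s + c ≤ K) (hG : a * s ≤ G)
    (hG' : c * (a * K - G) / (K - s) ≤ G' - G) :
    a * (s + c) ≤ G' := by
  have hKs : 0 < K - s := by linarith
  -- the chord from `(s, G)` to `(K, a K)`, evaluated at `s + c`
  have hchord : G + c * (a * K - G) / (K - s) = a * (s + c) + (G - a * s) * (1 - c / (K - s)) := by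
    field_simp
    ring
  have hweight : 0 ≤ 1 - c / (K - s) := sub_nonneg.2 ((div_le_one hKs).2 (by linarith))
  calc a * (s + c) ≤ a * (s + c) + (G - a * s) * (1 - c / (K - s)) :=
        le_add_of_nonneg_right (mul_nonneg (sub_nonneg.2 hG) hweight)
    _ = G + c * (a * K - G) / (K - s) := hchord.symm
    _ ≤ G' := by linarith

theorem stmt_1_general {α : Type*} [DecidableEq α]
    (g : Finset α → ℝ) (k : α → ℝ) (K v : ℝ)
    (hk : ∀ e, 0 < k e) (hK : 0 < K)
    (S : Finset α) (e : α) (he : e ∉ S)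
    (hbudget : (∑ x ∈ S, k x) + k e ≤ K)
    (hinv : v * (∑ x ∈ S, k x) / (2 * K) ≤ g S)
    (hthresh : k e * (v / 2 - g S) / (K - ∑ x ∈ S, k x) ≤ g (insert e S) - g S) :
    v * (∑ x ∈ insert e S, k x) / (2 * K) ≤ g (insert e S) := by
  have hslope : ∀ x, v * x / (2 * K) = v / (2 * K) * x := fun x => mul_div_right_comm v x (2 * K)
  have hhalf : v / 2 = v / (2 * K) * K := by field_simp
  rw [Finset.sum_insert he, add_comm, hslope]
  rw [hslope] at hinv
  rw [hhalf] at hthresh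
  exact mul_le_of_le_chord (hk e) hbudget hinv hthresh

/-- Single-step invariant of the streaming algorithm (Algorithm 2): if the bucket `S`
satisfies the running invariant `g S ≥ v·k(S)/(2K)` and the threshold condition holds
for a new element `e` that fits in the budget, then the invariant holds for `insert e S`. -/
theorem stmt_1 {α : Type*} [DecidableEq α]
    (g : Finset α → ℝ) (k : α → ℝ) (K v : ℝ)
    (hk : ∀ e, 0 < k e) (hK : 0 < K) (hv : 0 ≤ v)
    (S : Finset α) (e : α) (he : e ∉ S)
    (hbudget : (∑ x ∈ S, k x) + k e ≤ K)
    (hinv : v * (∑ x ∈ S, k x) / (2 * K) ≤ g S)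
    (hthresh : k e * (v / 2 - g S) / (K - ∑ x ∈ S, k x) ≤ g (insert e S) - g S) :
    v * (∑ x ∈ insert e S, k x) / (2 * K) ≤ g (insert e S) :=
  stmt_1_general g k K v hk hK S e he hbudget hinv hthresh
end

section
/- Let g : Finset α → ℝ with g(∅) = 0, let k : α → ℝ with k(e) > 0 for every e, let K > 0 and v ≥ 0 be reals. Let e₁, …, eₙ be distinct elements, and set S₀ := ∅ and S_j := S_{j−1} ∪ {e_j} for 1 ≤ j ≤ n. Suppose that for every j, k(S_{j−1}) + k(e_j) ≤ K and g(S_j) − g(S_{j−1}) ≥ k(e_j)·(v/2 − g(S_{j−1}))/(K − k(S_{j−1})). Then g(Sₙ) ≥ v·k(Sₙ)/(2K). -/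
/-!
Write `c = k(S)`, `a = k(e)` and `G = 2K·g(S) − v·c` for the slack of the invariant. Adding `e`
under the threshold condition gives `2K·g(S ∪ {e}) − v·(c + a) ≥ G·(1 − a/(K − c))`, which is
nonnegative by the budget constraint `a ≤ K − c`; so the invariant `v·k(S) ≤ 2K·g(S)` propagates
from `S₀ = ∅` to `Sₙ`.
-/

open Finset

theorem threshold_invariant_step {K v c a g g' : ℝ} (hK : 0 < K) (ha : 0 < a)
    (hbudget : c + a ≤ K) (hinv : v * c / (2 * K) ≤ g)
    (hthresh : a * (v / 2 - g) / (K - c) ≤ g' - g) :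
    v * (c + a) / (2 * K) ≤ g' := by
  have hKc : 0 < K - c := by linarith
  have hslack : 0 ≤ 2 * K * g - v * c := by
    rw [div_le_iff₀ (by positivity)] at hinv
    linarith
  have hgain : a * (v / 2 - g) ≤ (g' - g) * (K - c) := (div_le_iff₀ hKc).mp hthresh
  have hscaled : 0 ≤ (K - c) * (g' * (2 * K) - v * (c + a)) := by
    linear_combination mul_nonneg hslack (sub_nonneg.mpr (le_sub_iff_add_le'.mpr hbudget)) +
      mul_le_mul_of_nonneg_left hgain (by positivity : (0 : ℝ) ≤ 2 * K)
  rw [div_le_iff₀ (by positivity), ← sub_nonneg]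
  exact nonneg_of_mul_nonneg_right hscaled hKc

theorem threshold_invariant_insert {α : Type*} [DecidableEq α] {g : Finset α → ℝ}
    {k : α → ℝ} {K v : ℝ} {S : Finset α} {x : α} (hK : 0 < K) (hk : 0 < k x)
    (hbudget : (∑ y ∈ S, k y) + k x ≤ K) (hinv : v * (∑ y ∈ S, k y) / (2 * K) ≤ g S)
    (hthresh : k x * (v / 2 - g S) / (K - ∑ y ∈ S, k y) ≤ g (insert x S) - g S) :
    v * (∑ y ∈ insert x S, k y) / (2 * K) ≤ g (insert x S) := by
  by_cases hx : x ∈ S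
  · rwa [insert_eq_of_mem hx]
  · rw [sum_insert hx, add_comm]
    exact threshold_invariant_step hK hk hbudget hinv hthresh

theorem stmt_2_general {α : Type*} [DecidableEq α]
    (g : Finset α → ℝ) (k : α → ℝ) (K v : ℝ)
    (hg0 : g ∅ = 0) (hk : ∀ e, 0 < k e) (hK : 0 < K)
    (n : ℕ) (e : ℕ → α)
    (S : ℕ → Finset α) (hS0 : S 0 = ∅)
    (hSstep : ∀ j < n, S (j + 1) = insert (e j) (S j))
    (hbudget : ∀ j < n, (∑ x ∈ S j, k x) + k (e j) ≤ K)
    (hthresh : ∀ j < n,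
      k (e j) * (v / 2 - g (S j)) / (K - ∑ x ∈ S j, k x) ≤ g (S (j + 1)) - g (S j)) :
    v * (∑ x ∈ S n, k x) / (2 * K) ≤ g (S n) := by
  suffices h : ∀ m ≤ n, v * (∑ x ∈ S m, k x) / (2 * K) ≤ g (S m) from h n le_rfl
  intro m hm
  induction m with
  | zero => simp [hS0, hg0]
  | succ j ih =>
    have hj : j < n := hm
    have hthreshj := hthresh j hj
    rw [hSstep j hj] at hthreshj ⊢
    exact threshold_invariant_insert hK (hk (e j)) (hbudget j hj) (ih hj.le) hthreshj

/-- Running invariant of each bucket of the streaming algorithm (Algorithm 2):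
starting from the empty set and adding distinct elements `e 0, …, e (n-1)` one at a time,
each addition respecting the budget and the threshold condition, the final set `S n`
satisfies `g (S n) ≥ v·k(S n)/(2K)`. -/
theorem stmt_2 {α : Type*} [DecidableEq α]
    (g : Finset α → ℝ) (k : α → ℝ) (K v : ℝ)
    (hg0 : g ∅ = 0) (hk : ∀ e, 0 < k e) (hK : 0 < K) (hv : 0 ≤ v)
    (n : ℕ) (e : ℕ → α) (hinj : Set.InjOn e (Set.Iio n))
    (S : ℕ → Finset α) (hS0 : S 0 = ∅)
    (hSstep : ∀ j < n, S (j + 1) = insert (e j) (S j))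
    (hbudget : ∀ j < n, (∑ x ∈ S j, k x) + k (e j) ≤ K)
    (hthresh : ∀ j < n,
      k (e j) * (v / 2 - g (S j)) / (K - ∑ x ∈ S j, k x) ≤ g (S (j + 1)) - g (S j)) :
    v * (∑ x ∈ S n, k x) / (2 * K) ≤ g (S n) :=
  stmt_2_general g k K v hg0 hk hK n e S hS0 hSstep hbudget hthresh
end

section
/- Let g : Finset α → ℝ be a monotone submodular set function, let k : α → ℝ with k(e) > 0 for every e, let K > 0 and v be reals, and let S and T be finsets with k(S) < K, k(T \ S) ≤ K, and g(S) ≤ v/2. Suppose that every element e ∈ T \ S satisfies g(S ∪ {e}) − g(S) ≤ k(e)·(v/2 − g(S))/(K − k(S)). Then g(T) ≤ g(S) + K·(v/2 − g(S))/(K − k(S)). -/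
/-!
Submodularity bounds the gain of adding a set to `S` by the sum of the marginal gains of its
elements with respect to `S`. Each element of `T \ S` failed the threshold test, so its marginal
gain is at most `k e` times the threshold density; summing over `T \ S`, whose cost is at most
`K`, and using monotonicity to pass from `S ∪ T` to `T` gives the bound.
-/

section Submodular

variable {α β : Type*} [DecidableEq α] [AddCommGroup β] [PartialOrder β] [IsOrderedAddMonoid β]

theorem le_add_sum_marginal_of_submodular {g : Finset α → β}
    (hsub : ∀ S T : Finset α, g (S ∪ T) + g (S ∩ T) ≤ g S + g T) (S A : Finset α) :
    g (S ∪ A) ≤ g S + ∑ e ∈ A, (g (insert e S) - g S) := by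
  induction A using Finset.induction_on with
  | empty => simp
  | @insert a A ha ih =>
    have hunion : S ∪ A ∪ insert a S = S ∪ insert a A := by
      ext x; simp only [Finset.mem_union, Finset.mem_insert]; tauto
    have hinter : (S ∪ A) ∩ insert a S = S := by
      ext x; simp only [Finset.mem_inter, Finset.mem_union, Finset.mem_insert]
      constructor
      · rintro ⟨hS | hA, rfl | hS'⟩ <;> first | assumption | exact absurd hA ha
      · exact fun hS => ⟨Or.inl hS, Or.inr hS⟩
    have hstep := hsub (S ∪ A) (insert a S)
    rw [hunion, hinter, ← le_sub_iff_add_le] at hstep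
    calc g (S ∪ insert a A) ≤ g (S ∪ A) + (g (insert a S) - g S) := by
          rwa [add_sub_assoc] at hstep
      _ ≤ g S + ∑ e ∈ A, (g (insert e S) - g S) + (g (insert a S) - g S) := by gcongr
      _ = g S + ∑ e ∈ insert a A, (g (insert e S) - g S) := by
          rw [Finset.sum_insert ha, add_assoc, add_comm (∑ e ∈ A, _)]

end Submodular

theorem stmt_8_general {α : Type*} [DecidableEq α]
    (g : Finset α → ℝ) (k : α → ℝ) (K v : ℝ)
    (hmono : ∀ S T : Finset α, S ⊆ T → g S ≤ g T)
    (hsub : ∀ S T : Finset α, g (S ∪ T) + g (S ∩ T) ≤ g S + g T)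
    (S T : Finset α)
    (hS : (∑ x ∈ S, k x) < K)
    (hT : (∑ x ∈ T \ S, k x) ≤ K)
    (hgS : g S ≤ v / 2)
    (hthresh : ∀ e ∈ T \ S,
      g (insert e S) - g S ≤ k e * (v / 2 - g S) / (K - ∑ x ∈ S, k x)) :
    g T ≤ g S + K * (v / 2 - g S) / (K - ∑ x ∈ S, k x) := by
  set density := (v / 2 - g S) / (K - ∑ x ∈ S, k x)
  have hdensity : 0 ≤ density := div_nonneg (by linarith) (by linarith)
  calc g T ≤ g (S ∪ (T \ S)) := hmono _ _ (by simp)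
    _ ≤ g S + ∑ e ∈ T \ S, (g (insert e S) - g S) := le_add_sum_marginal_of_submodular hsub S _
    _ ≤ g S + ∑ e ∈ T \ S, k e * density := by
        gcongr with e he
        rw [← mul_div_assoc]
        exact hthresh e he
    _ = g S + (∑ e ∈ T \ S, k e) * density := by rw [Finset.sum_mul]
    _ ≤ g S + K * density := by gcongr
    _ = g S + K * (v / 2 - g S) / (K - ∑ x ∈ S, k x) := by rw [mul_div_assoc]

/-- Stream-end case of the analysis of Algorithm 2: if every element of `T \ S`
failed the threshold test for bucket `S`, then `g T` is bounded in terms of `g S`. -/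
theorem stmt_8 {α : Type*} [DecidableEq α]
    (g : Finset α → ℝ) (k : α → ℝ) (K v : ℝ)
    (hmono : ∀ S T : Finset α, S ⊆ T → g S ≤ g T)
    (hsub : ∀ S T : Finset α, g (S ∪ T) + g (S ∩ T) ≤ g S + g T)
    (hk : ∀ e, 0 < k e) (hK : 0 < K)
    (S T : Finset α)
    (hS : (∑ x ∈ S, k x) < K)
    (hT : (∑ x ∈ T \ S, k x) ≤ K)
    (hgS : g S ≤ v / 2)
    (hthresh : ∀ e ∈ T \ S,
      g (insert e S) - g S ≤ k e * (v / 2 - g S) / (K - ∑ x ∈ S, k x)) :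
    g T ≤ g S + K * (v / 2 - g S) / (K - ∑ x ∈ S, k x) :=
  stmt_8_general g k K v hmono hsub S T hS hT hgS hthresh
end
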